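/- Let m ∈ ℕ, let ξ₁ < ξ₂ < … < ξ_m be real numbers, let α₁, …, α_m ∈ ℝ, and let c₀ > 0 satisfy 6·c₀·|α_k| < 1 for every k and (if m ≥ 2) c₀ < (1/2)·min_k (ξ_{k+1} − ξ_k). For each k define φ̄_k(x) = φ((x−ξ_k)/c₀)·(x−ξ_k)·|x−ξ_k| with φ(u) = (1+u)³(1−u)³ for |u| ≤ 1 and φ(u) = 0 otherwise, and define G(x) = x + Σ_{k=1}^m α_k·φ̄_k(x). Then: (a) G(x) = x for every x outside the union of the intervals (ξ_k − c₀, ξ_k + c₀); (b) G is strictly increasing and is a bijection of ℝ onto ℝ with strictly increasing inverse G⁻¹; (c) G − id and G⁻¹ − id are bounded, and G and G⁻¹ are Lipschitz; (d) G and G⁻¹ are continuously differentiable with bounded, Lipschitz first derivatives, and at every point outside the finite set {ξ₁, …, ξ_m} both G and G⁻¹ are twice differentiable with second derivatives that are bounded and Lipschitz on each connected component of the complement of that finite set. -/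

import Mathlib

/-- The basic bump `φ(u) = (1+u)³(1-u)³` on `[-1,1]`, zero outside. -/
noncomputable def phi (u : ℝ) : ℝ := if |u| ≤ 1 then (1 + u) ^ 3 * (1 - u) ^ 3 else 0

/-- The localized bump `φ̄_k(x) = φ((x-ξ)/c)·(x-ξ)·|x-ξ|`. -/
noncomputable def phibar (ξ c x : ℝ) : ℝ := phi ((x - ξ) / c) * (x - ξ) * |x - ξ|

/-!
Write `phibar ξ c x = c² ψ((x - ξ)/c)` with `ψ(u) = sign u · u²(1 - u²)³` on `[-1, 1]` and `0`
outside. Then `ψ` is `C¹`, `ψ'` is `C¹` off `0` and `ψ''` is `C¹` off `{-1, 0, 1}`, all with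
bounded derivatives, and `|ψ'| ≤ 6`. Since the bumps have disjoint supports,
`G' = 1 + c₀ ∑ α_k ψ'((x - ξ_k)/c₀) ≥ 1 - 6 c₀ max |α_k| > 0`, so `G` is an increasing bijection
and `(G⁻¹)' = 1 / G' ∘ G⁻¹`. Having three bounded derivatives off finitely many points survives
rescaled sums and inversion (the `ξ_k` are fixed by `G`), and a continuous function whose
derivative is bounded off a finite set is Lipschitz on every interval.
-/

open Set Filter Topology

section RealLipschitz

variable {D S : Set ℝ} {f f' : ℝ → ℝ} {C : ℝ}

theorem LipschitzOnWith.of_abs_sub_le_mul_sub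
    (h : ∀ x ∈ D, ∀ y ∈ D, x ≤ y → |f y - f x| ≤ C * (y - x)) :
    LipschitzOnWith C.toNNReal f D := by
  refine LipschitzOnWith.of_dist_le_mul fun x hx y hy => ?_
  rw [Real.dist_eq, Real.dist_eq]
  rcases le_total x y with hxy | hyx
  · rw [abs_sub_comm, abs_sub_comm x, abs_of_nonneg (sub_nonneg.2 hxy)]
    exact (h x hx y hy hxy).trans (mul_le_mul_of_nonneg_right C.le_coe_toNNReal (sub_nonneg.2 hxy))
  · rw [abs_of_nonneg (sub_nonneg.2 hyx)]
    exact (h y hy x hx hyx).trans (mul_le_mul_of_nonneg_right C.le_coe_toNNReal (sub_nonneg.2 hyx))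

theorem abs_sub_le_mul_sub_of_hasDerivAt (hD : D.OrdConnected) (hf : ContinuousOn f D)
    (hf' : ∀ x ∈ interior D, HasDerivAt f (f' x) x) (hC : ∀ x ∈ interior D, |f' x| ≤ C) :
    ∀ x ∈ D, ∀ y ∈ D, x ≤ y → |f y - f x| ≤ C * (y - x) := by
  have hdiff : DifferentiableOn ℝ f (interior D) := fun x hx =>
    (hf' x hx).differentiableAt.differentiableWithinAt
  have hderiv : ∀ x ∈ interior D, |deriv f x| ≤ C := fun x hx => (hf' x hx).deriv ▸ hC x hx
  intro x hx y hy hxy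
  rw [abs_le]
  constructor
  · have := hD.convex.mul_sub_le_image_sub_of_le_deriv hf hdiff
      (fun z hz => (abs_le.1 (hderiv z hz)).1) x hx y hy hxy
    linarith
  · exact hD.convex.image_sub_le_mul_sub_of_deriv_le hf hdiff
      (fun z hz => (abs_le.1 (hderiv z hz)).2) x hx y hy hxy

theorem abs_sub_le_mul_sub_of_hasDerivAt_off_finite (hD : D.OrdConnected) (hS : S.Finite)
    (hf : ContinuousOn f D) (hf' : ∀ x ∈ interior D, x ∉ S → HasDerivAt f (f' x) x)
    (hC : ∀ x ∈ interior D, x ∉ S → |f' x| ≤ C) :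
    ∀ x ∈ D, ∀ y ∈ D, x ≤ y → |f y - f x| ≤ C * (y - x) := by
  induction S, hS using Set.Finite.induction_on generalizing D with
  | empty =>
    exact abs_sub_le_mul_sub_of_hasDerivAt hD hf (fun x hx => hf' x hx (notMem_empty x))
      (fun x hx => hC x hx (notMem_empty x))
  | @insert a S _ _ ih =>
    -- `a` is not an interior point of `D ∩ Iic a` or `D ∩ Ici a`; glue the two halves at `a`.
    have side : ∀ T : Set ℝ, T.OrdConnected → interior T ⊆ {a}ᶜ →
        ∀ x ∈ D ∩ T, ∀ y ∈ D ∩ T, x ≤ y → |f y - f x| ≤ C * (y - x) := by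
      intro T hT hTa
      have hint : ∀ x ∈ interior (D ∩ T), x ∉ S → x ∈ interior D ∧ x ∉ insert a S := by
        intro x hx hxS
        rw [interior_inter] at hx
        exact ⟨hx.1, by simpa [hxS] using hTa hx.2⟩
      exact ih (hD.inter hT) (hf.mono inter_subset_left)
        (fun x hx hxS => hf' x (hint x hx hxS).1 (hint x hx hxS).2)
        (fun x hx hxS => hC x (hint x hx hxS).1 (hint x hx hxS).2)
    have hIic := side (Iic a) ordConnected_Iic (by simp)
    have hIci := side (Ici a) ordConnected_Ici (by simp)
    intro x hx y hy hxy
    rcases le_total y a with hya | hay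
    · exact hIic x ⟨hx, hxy.trans hya⟩ y ⟨hy, hya⟩ hxy
    rcases le_total a x with hax | hxa
    · exact hIci x ⟨hx, hax⟩ y ⟨hy, hay⟩ hxy
    have ha : a ∈ D := hD.out hx hy ⟨hxa, hay⟩
    calc |f y - f x| ≤ |f y - f a| + |f a - f x| := abs_sub_le _ _ _
      _ ≤ C * (y - a) + C * (a - x) := add_le_add
          (hIci a ⟨ha, self_mem_Ici⟩ y ⟨hy, hay⟩ hay) (hIic x ⟨hx, hxa⟩ a ⟨ha, self_mem_Iic⟩ hxa)
      _ = C * (y - x) := by ring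

theorem lipschitzOnWith_of_hasDerivAt_off_finite (hD : D.OrdConnected) (hS : S.Finite)
    (hf : ContinuousOn f D) (hf' : ∀ x ∈ interior D, x ∉ S → HasDerivAt f (f' x) x)
    (hC : ∀ x ∈ interior D, x ∉ S → |f' x| ≤ C) : LipschitzOnWith C.toNNReal f D :=
  .of_abs_sub_le_mul_sub (abs_sub_le_mul_sub_of_hasDerivAt_off_finite hD hS hf hf' hC)

end RealLipschitz

theorem eventually_notMem_of_finite {E : Set ℝ} (hE : E.Finite) (u : ℝ) :
    ∀ᶠ v in 𝓝[≠] u, v ∉ E := by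
  have : ∀ᶠ v in 𝓝 u, v ∉ E \ {u} :=
    (hE.sdiff).isClosed.compl_mem_nhds (by simp)
  filter_upwards [nhdsWithin_le_nhds this, self_mem_nhdsWithin] with v hv hvu
  exact fun hvE => hv ⟨hvE, hvu⟩

theorem hasDerivAt_of_hasDerivAt_off_finite {E : Set ℝ} {f f' : ℝ → ℝ} {u : ℝ} (hE : E.Finite)
    (hd : ∀ v ∉ E, HasDerivAt f (f' v) v) (hf : ContinuousAt f u) (hf' : ContinuousAt f' u) :
    HasDerivAt f (f' u) u := by
  have hev : ∀ᶠ v in 𝓝[≠] u, HasDerivAt f (f' v) v :=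
    (eventually_notMem_of_finite hE u).mono hd
  have hdiff : DifferentiableOn ℝ f {v | HasDerivAt f (f' v) v} := fun v hv =>
    hv.differentiableAt.differentiableWithinAt
  have hlim : ∀ l ≤ 𝓝[≠] u, Tendsto (deriv f) l (𝓝 (f' u)) := fun l hl =>
    ((hf'.tendsto.mono_left (hl.trans nhdsWithin_le_nhds)).congr'
      ((hev.filter_mono hl).mono fun v hv => hv.deriv.symm))
  have hgt : 𝓝[>] u ≤ 𝓝[≠] u := nhdsWithin_mono _ fun v hv => ne_of_gt hv
  have hlt : 𝓝[<] u ≤ 𝓝[≠] u := nhdsWithin_mono _ fun v hv => ne_of_lt hv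
  have hright := hasDerivWithinAt_Ici_of_tendsto_deriv hdiff hf.continuousWithinAt
    (hgt hev) (hlim _ hgt)
  have hleft := hasDerivWithinAt_Iic_of_tendsto_deriv hdiff hf.continuousWithinAt
    (hlt hev) (hlim _ hlt)
  simpa using hleft.union hright

structure HasBoundedDerivs (Z E : Set ℝ) (M : ℝ) (f f₁ f₂ f₃ : ℝ → ℝ) : Prop where
  finite : E.Finite
  subset : Z ⊆ E
  hasDerivAt : ∀ x, HasDerivAt f (f₁ x) x
  hasDerivAt₁ : ∀ x ∉ Z, HasDerivAt f₁ (f₂ x) x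
  hasDerivAt₂ : ∀ x ∉ E, HasDerivAt f₂ (f₃ x) x
  continuous₁ : Continuous f₁
  continuousOn₂ : ContinuousOn f₂ Zᶜ
  abs_le₁ : ∀ x, |f₁ x| ≤ M
  abs_le₂ : ∀ x ∉ Z, |f₂ x| ≤ M
  abs_le₃ : ∀ x ∉ E, |f₃ x| ≤ M

namespace HasBoundedDerivs

variable {Z E : Set ℝ} {M : ℝ} {f f₁ f₂ f₃ : ℝ → ℝ} (h : HasBoundedDerivs Z E M f f₁ f₂ f₃)
include h

theorem mono {M' : ℝ} (hM : M ≤ M') : HasBoundedDerivs Z E M' f f₁ f₂ f₃ where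
  __ := h
  abs_le₁ x := (h.abs_le₁ x).trans hM
  abs_le₂ x hx := (h.abs_le₂ x hx).trans hM
  abs_le₃ x hx := (h.abs_le₃ x hx).trans hM

theorem deriv_eq : deriv f = f₁ := funext fun x => (h.hasDerivAt x).deriv

theorem differentiable : Differentiable ℝ f := fun x => (h.hasDerivAt x).differentiableAt

theorem abs_deriv_le (x : ℝ) : |deriv f x| ≤ M := h.deriv_eq ▸ h.abs_le₁ x

theorem hasDerivAt_deriv {x : ℝ} (hx : x ∉ Z) : HasDerivAt (deriv f) (f₂ x) x :=
  h.deriv_eq ▸ h.hasDerivAt₁ x hx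

theorem abs_deriv_deriv_le {x : ℝ} (hx : x ∉ Z) : |deriv (deriv f) x| ≤ M :=
  (h.hasDerivAt_deriv hx).deriv ▸ h.abs_le₂ x hx

theorem lipschitzWith : LipschitzWith M.toNNReal f :=
  lipschitzOnWith_univ.1 <| lipschitzOnWith_of_hasDerivAt_off_finite ordConnected_univ
    finite_empty h.differentiable.continuous.continuousOn (fun x _ _ => h.hasDerivAt x)
    (fun x _ _ => h.abs_le₁ x)

theorem lipschitzWith_deriv : LipschitzWith M.toNNReal (deriv f) :=
  h.deriv_eq ▸ lipschitzOnWith_univ.1 (lipschitzOnWith_of_hasDerivAt_off_finite ordConnected_univ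
    (h.finite.subset h.subset) h.continuous₁.continuousOn (fun x _ hx => h.hasDerivAt₁ x hx)
    (fun x _ hx => h.abs_le₂ x hx))

theorem lipschitzOnWith_deriv_deriv {s : Set ℝ} (hs : IsPreconnected s) (hsZ : ∀ x ∈ s, x ∉ Z) :
    LipschitzOnWith M.toNNReal (deriv (deriv f)) s := by
  have hf₂ := lipschitzOnWith_of_hasDerivAt_off_finite (isPreconnected_iff_ordConnected.1 hs)
    h.finite (h.continuousOn₂.mono hsZ) (fun x _ hx => h.hasDerivAt₂ x hx)
    (fun x _ hx => h.abs_le₃ x hx)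
  intro x hx y hy
  rw [(h.hasDerivAt_deriv (hsZ x hx)).deriv, (h.hasDerivAt_deriv (hsZ y hy)).deriv]
  exact hf₂ hx hy

end HasBoundedDerivs

section Inverse

variable {f f₁ : ℝ → ℝ} {δ : ℝ}

theorem surjective_of_le_hasDerivAt (hf : ∀ x, HasDerivAt f (f₁ x) x) (hδ : 0 < δ)
    (hf₁ : ∀ x, δ ≤ f₁ x) : Function.Surjective f := by
  have hdiff : Differentiable ℝ f := fun x => (hf x).differentiableAt
  have hgrowth : ∀ x y, x ≤ y → δ * (y - x) ≤ f y - f x :=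
    mul_sub_le_image_sub_of_le_deriv hdiff fun x => (hf x).deriv ▸ hf₁ x
  have hlin : Tendsto (fun x => δ * x) atTop atTop := tendsto_id.const_mul_atTop hδ
  refine hdiff.continuous.surjective ?_ ?_
  · refine tendsto_atTop_mono' _ ?_ (tendsto_atTop_add_const_left _ (f 0) hlin)
    filter_upwards [eventually_ge_atTop 0] with x hx
    linarith [hgrowth 0 x hx]
  · refine tendsto_atBot_mono' _ ?_ (tendsto_atBot_add_const_left _ (f 0)
      (tendsto_id.const_mul_atBot hδ))
    filter_upwards [eventually_le_atBot 0] with x hx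
    dsimp only [id]
    linarith [hgrowth x 0 hx]

theorem StrictMono.strictMono_invFun (hf : StrictMono f) (hsurj : Function.Surjective f) :
    StrictMono (Function.invFun f) := fun x y hxy =>
  hf.lt_iff_lt.1 <| by rwa [Function.invFun_eq (hsurj x), Function.invFun_eq (hsurj y)]

theorem abs_invFun_sub_le (hsurj : Function.Surjective f) {B : ℝ} (hB : ∀ x, |f x - x| ≤ B)
    (x : ℝ) : |Function.invFun f x - x| ≤ B := by
  simpa [abs_sub_comm, Function.invFun_eq (hsurj x)] using hB (Function.invFun f x)

theorem hasDerivAt_invFun (hf : ∀ x, HasDerivAt f (f₁ x) x) (hδ : 0 < δ)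
    (hf₁ : ∀ x, δ ≤ f₁ x) (x : ℝ) :
    HasDerivAt (Function.invFun f) (f₁ (Function.invFun f x))⁻¹ x := by
  have hsurj := surjective_of_le_hasDerivAt hf hδ hf₁
  have hmono : StrictMono f := strictMono_of_hasDerivAt_pos hf fun x => hδ.trans_le (hf₁ x)
  have hcont : Continuous (Function.invFun f) :=
    (hmono.strictMono_invFun hsurj).monotone.continuous_of_surjective
      fun x => ⟨f x, Function.leftInverse_invFun hmono.injective x⟩
  exact (hf _).of_local_left_inverse hcont.continuousAt (hδ.trans_le (hf₁ _)).ne'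
    (.of_forall fun y => Function.invFun_eq (hsurj y))

end Inverse

section InverseDerivs

variable {g f₁ f₂ : ℝ → ℝ} {x a b : ℝ} (hg : HasDerivAt g (f₁ (g x))⁻¹ x) (h₀ : f₁ (g x) ≠ 0)
include hg h₀

theorem hasDerivAt_inv_comp (hf₁ : HasDerivAt f₁ a (g x)) :
    HasDerivAt (fun y => (f₁ (g y))⁻¹) (-a * (f₁ (g x))⁻¹ ^ 3) x :=
  ((hf₁.comp x hg).inv h₀).congr_deriv <| by
    simp only [Function.comp]
    field_simp

theorem hasDerivAt_neg_mul_inv_comp_pow (hf₁ : HasDerivAt f₁ a (g x))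
    (hf₂ : HasDerivAt f₂ b (g x)) :
    HasDerivAt (fun y => -f₂ (g y) * (f₁ (g y))⁻¹ ^ 3)
      (-b * (f₁ (g x))⁻¹ ^ 4 + 3 * f₂ (g x) * a * (f₁ (g x))⁻¹ ^ 5) x :=
  ((hf₂.comp x hg).neg.mul ((hasDerivAt_inv_comp hg h₀ hf₁).pow 3)).congr_deriv <| by
    simp only [Function.comp, Pi.pow_apply, Pi.neg_apply]
    ring

end InverseDerivs

theorem HasBoundedDerivs.invFun {Z E : Set ℝ} {M δ : ℝ} {f f₁ f₂ f₃ : ℝ → ℝ}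
    (h : HasBoundedDerivs Z E M f f₁ f₂ f₃) (hδ : 0 < δ) (hf₁ : ∀ x, δ ≤ f₁ x)
    (hZ : ∀ z ∈ Z, f z = z) :
    ∃ M' g₁ g₂ g₃, HasBoundedDerivs Z (f '' E) M' (Function.invFun f) g₁ g₂ g₃ := by
  set g := Function.invFun f
  have hfg : ∀ x, f (g x) = x := fun x =>
    Function.invFun_eq (surjective_of_le_hasDerivAt h.hasDerivAt hδ hf₁ x)
  have hg : ∀ x, HasDerivAt g (f₁ (g x))⁻¹ x := hasDerivAt_invFun h.hasDerivAt hδ hf₁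
  have hcont : Continuous g := continuous_iff_continuousAt.2 fun x => (hg x).continuousAt
  have hpos : ∀ x, f₁ (g x) ≠ 0 := fun x => (hδ.trans_le (hf₁ _)).ne'
  have hgZ : ∀ x ∉ Z, g x ∉ Z := fun x hx hgx => hx (by rwa [← hfg x, hZ _ hgx])
  have hgE : ∀ x ∉ f '' E, g x ∉ E := fun x hx hgx => hx ⟨g x, hgx, hfg x⟩
  have hZE : ∀ x ∉ f '' E, x ∉ Z := fun x hx hxZ => hx ⟨x, h.subset hxZ, hZ x hxZ⟩
  set g₁ := fun x => (f₁ (g x))⁻¹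
  set g₂ := fun x => -f₂ (g x) * g₁ x ^ 3
  set g₃ := fun x => -f₃ (g x) * g₁ x ^ 4 + 3 * f₂ (g x) * f₂ (g x) * g₁ x ^ 5
  have hg₁ : ∀ x ∉ Z, HasDerivAt g₁ (g₂ x) x := fun x hx =>
    hasDerivAt_inv_comp (hg x) (hpos x) (h.hasDerivAt₁ _ (hgZ x hx))
  have hg₂ : ∀ x ∉ f '' E, HasDerivAt g₂ (g₃ x) x := fun x hx =>
    hasDerivAt_neg_mul_inv_comp_pow (hg x) (hpos x) (h.hasDerivAt₁ _ (hgZ x (hZE x hx)))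
      (h.hasDerivAt₂ _ (hgE x hx))
  have hM : 0 ≤ M := (abs_nonneg _).trans (h.abs_le₁ 0)
  have hb₁ : ∀ x, |g₁ x| ≤ δ⁻¹ := fun x => by
    rw [abs_inv, abs_of_pos (hδ.trans_le (hf₁ _))]
    exact inv_anti₀ hδ (hf₁ _)
  have hb₂ : ∀ x ∉ Z, |g₂ x| ≤ M * δ⁻¹ ^ 3 := fun x hx => by
    rw [abs_mul, abs_neg, abs_pow]
    exact mul_le_mul (h.abs_le₂ _ (hgZ x hx)) (pow_le_pow_left₀ (abs_nonneg _) (hb₁ x) 3)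
      (by positivity) hM
  have hb₃ : ∀ x ∉ f '' E, |g₃ x| ≤ M * δ⁻¹ ^ 4 + 3 * M * M * δ⁻¹ ^ 5 := fun x hx => by
    refine (abs_add_le _ _).trans (add_le_add ?_ ?_)
    · rw [abs_mul, abs_neg, abs_pow]
      exact mul_le_mul (h.abs_le₃ _ (hgE x hx)) (pow_le_pow_left₀ (abs_nonneg _) (hb₁ x) 4)
        (by positivity) hM
    · rw [abs_mul, abs_mul, abs_mul, abs_pow, abs_of_pos three_pos]
      have := h.abs_le₂ _ (hgZ x (hZE x hx))
      gcongr
      exact hb₁ x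
  have hδ' : 0 ≤ δ⁻¹ := by positivity
  refine ⟨δ⁻¹ + M * δ⁻¹ ^ 3 + (M * δ⁻¹ ^ 4 + 3 * M * M * δ⁻¹ ^ 5), g₁, g₂, g₃,
    { finite := h.finite.image f
      subset := fun z hz => ⟨z, h.subset hz, hZ z hz⟩
      hasDerivAt := hg
      hasDerivAt₁ := hg₁
      hasDerivAt₂ := hg₂
      continuous₁ := (h.continuous₁.comp hcont).inv₀ hpos
      continuousOn₂ := ((h.continuousOn₂.comp hcont.continuousOn hgZ).neg).mul
        (((h.continuous₁.comp hcont).inv₀ hpos).pow 3).continuousOn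
      abs_le₁ := fun x => (hb₁ x).trans ?_
      abs_le₂ := fun x hx => (hb₂ x hx).trans ?_
      abs_le₃ := fun x hx => (hb₃ x hx).trans ?_ }⟩ <;>
  nlinarith [pow_nonneg hδ' 3, pow_nonneg hδ' 4, pow_nonneg hδ' 5, mul_nonneg hM hM]

noncomputable def signCutoff (p : ℝ → ℝ) (u : ℝ) : ℝ :=
  SignType.sign u * if |u| ≤ 1 then p u else 0

section SignCutoff

variable {p q : ℝ → ℝ} {u : ℝ}

theorem signCutoff_of_one_lt_abs (hu : 1 < |u|) : signCutoff p u = 0 := by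
  simp [signCutoff, hu.not_ge]

theorem abs_sign_le_one (u : ℝ) : |(SignType.sign u : ℝ)| ≤ 1 := by
  rcases lt_trichotomy u 0 with h | rfl | h <;> simp [sign_neg, sign_pos, *]

theorem abs_pow_le_one {v : ℝ} (hv : |v| ≤ 1) (n : ℕ) : |v ^ n| ≤ 1 := by
  simpa [abs_pow] using pow_le_one₀ (abs_nonneg v) hv

theorem abs_signCutoff_le {B : ℝ} (hB : 0 ≤ B) (hp : ∀ v, |v| ≤ 1 → |p v| ≤ B) :
    |signCutoff p u| ≤ B := by
  unfold signCutoff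
  split_ifs with hu
  · simpa [abs_mul] using mul_le_mul (abs_sign_le_one u) (hp u hu) (abs_nonneg _) zero_le_one
  · simpa using hB

theorem continuous_cutoff (hp : Continuous p) (hp₁ : p 1 = 0) (hpn : p (-1) = 0) :
    Continuous fun u => if |u| ≤ 1 then p u else 0 :=
  hp.if_le continuous_const continuous_abs continuous_const fun u hu => by
    rcases (abs_eq zero_le_one).1 hu with rfl | rfl <;> assumption

theorem continuousAt_signCutoff (hp : Continuous p) (hp₁ : p 1 = 0) (hpn : p (-1) = 0)
    (hu : u ≠ 0 ∨ p 0 = 0) : ContinuousAt (signCutoff p) u := by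
  have hcut := continuous_cutoff hp hp₁ hpn
  rcases eq_or_ne u 0 with rfl | hu₀
  · have hp₀ : p 0 = 0 := hu.resolve_left (not_not.2 rfl)
    have hlim : Tendsto (fun v => |if |v| ≤ 1 then p v else 0|) (𝓝 0) (𝓝 0) := by
      simpa [hp₀] using (hcut.tendsto 0).abs
    rw [ContinuousAt, show signCutoff p 0 = 0 by simp [signCutoff]]
    refine squeeze_zero_norm (fun v => ?_) hlim
    rw [Real.norm_eq_abs, signCutoff, abs_mul]
    exact mul_le_of_le_one_left (abs_nonneg _) (abs_sign_le_one v)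
  · exact ((continuous_of_discreteTopology (f := ((↑) : SignType → ℝ))).continuousAt.comp
      (continuousAt_sign_of_ne_zero hu₀)).mul hcut.continuousAt

theorem hasDerivAt_signCutoff (hp : HasDerivAt p (q u) u) (hu : u ∉ ({-1, 0, 1} : Set ℝ)) :
    HasDerivAt (signCutoff p) (signCutoff q u) u := by
  have hu₀ : u ≠ 0 := fun h => hu (by simp [h])
  have hu₁ : |u| ≠ 1 := fun h => hu (by rcases (abs_eq zero_le_one).1 h with h | h <;> simp [h])
  have hsign : ∀ᶠ v in 𝓝 u, SignType.sign v = SignType.sign u :=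
    (continuousAt_sign_of_ne_zero hu₀).eventually_mem (mem_nhds_discrete.2 (mem_singleton _))
  rcases hu₁.lt_or_gt with hlt | hgt
  · have heq : signCutoff p =ᶠ[𝓝 u] fun v => SignType.sign u * p v := by
      filter_upwards [hsign, (continuous_abs.tendsto u).eventually (gt_mem_nhds hlt)]
        with v hv hv₁
      simp [signCutoff, hv, hv₁.le]
    simpa [signCutoff, hlt.le] using (hp.const_mul _).congr_of_eventuallyEq heq
  · have heq : signCutoff p =ᶠ[𝓝 u] fun _ => 0 := by
      filter_upwards [(continuous_abs.tendsto u).eventually (lt_mem_nhds hgt)] with v hv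
      exact signCutoff_of_one_lt_abs hv
    simpa [signCutoff_of_one_lt_abs hgt] using
      (hasDerivAt_const u (0 : ℝ)).congr_of_eventuallyEq heq

end SignCutoff

noncomputable def psi : ℝ → ℝ := signCutoff fun v => v ^ 2 * (1 - v ^ 2) ^ 3

noncomputable def psiDeriv : ℝ → ℝ := signCutoff fun v => 2 * v * (1 - v ^ 2) ^ 2 * (1 - 4 * v ^ 2)

noncomputable def psiDeriv2 : ℝ → ℝ := signCutoff fun v => 2 - 36 * v ^ 2 + 90 * v ^ 4 - 56 * v ^ 6

noncomputable def psiDeriv3 : ℝ → ℝ := signCutoff fun v => -72 * v + 360 * v ^ 3 - 336 * v ^ 5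

theorem phibar_eq_psi {c : ℝ} (hc : 0 < c) (ξ x : ℝ) :
    phibar ξ c x = c ^ 2 * psi ((x - ξ) / c) := by
  obtain ⟨u, rfl⟩ : ∃ u, x = ξ + c * u := ⟨(x - ξ) / c, by field_simp; ring⟩
  have hu : (ξ + c * u - ξ) / c = u := by field_simp; ring
  rw [phibar, hu, add_sub_cancel_left, abs_mul, abs_of_pos hc, psi, signCutoff, phi,
    ← sign_mul_self u]
  split_ifs <;> ring

theorem psi_eq_zero_of_one_le_abs {u : ℝ} (hu : 1 ≤ |u|) : psi u = 0 := by
  rcases hu.lt_or_eq with hu | hu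
  · exact signCutoff_of_one_lt_abs hu
  · rcases (abs_eq zero_le_one).1 hu.symm with rfl | rfl <;> norm_num [psi, signCutoff]

theorem psi_zero : psi 0 = 0 := by simp [psi, signCutoff]

theorem abs_psi_le_one (u : ℝ) : |psi u| ≤ 1 :=
  abs_signCutoff_le zero_le_one fun v hv => by
    have h₀ : 0 ≤ 1 - v ^ 2 := by nlinarith [abs_le.1 hv]
    have h₁ : v ^ 2 ≤ 1 := by linarith
    rw [abs_of_nonneg (by positivity)]
    calc v ^ 2 * (1 - v ^ 2) ^ 3 ≤ 1 * 1 ^ 3 := by gcongr; linarith [sq_nonneg v]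
      _ = 1 := by norm_num

theorem abs_psiDeriv_le (u : ℝ) : |psiDeriv u| ≤ 6 :=
  abs_signCutoff_le (by norm_num) fun v hv => by
    have h₀ : 0 ≤ 1 - v ^ 2 := by nlinarith [abs_le.1 hv]
    have h₁ : |1 - 4 * v ^ 2| ≤ 3 := abs_le.2 ⟨by nlinarith [abs_le.1 hv], by nlinarith⟩
    rw [abs_mul, abs_mul, abs_mul, abs_pow, abs_of_nonneg h₀, abs_two]
    calc 2 * |v| * (1 - v ^ 2) ^ 2 * |1 - 4 * v ^ 2| ≤ 2 * 1 * 1 ^ 2 * 3 := by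
          gcongr; linarith [sq_nonneg v]
      _ = 6 := by norm_num

theorem psiDeriv_eq_zero_of_one_lt_abs {u : ℝ} (hu : 1 < |u|) : psiDeriv u = 0 :=
  signCutoff_of_one_lt_abs hu

theorem continuous_psiDeriv : Continuous psiDeriv :=
  continuous_iff_continuousAt.2 fun _ =>
    continuousAt_signCutoff (by fun_prop) (by norm_num) (by norm_num) (.inr (by norm_num))

theorem continuousAt_psiDeriv2 {u : ℝ} (hu : u ≠ 0) : ContinuousAt psiDeriv2 u :=
  continuousAt_signCutoff (by fun_prop) (by norm_num) (by norm_num) (.inl hu)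

theorem hasDerivAt_psi (u : ℝ) : HasDerivAt psi (psiDeriv u) u := by
  have hp : ∀ v : ℝ, HasDerivAt (fun v => v ^ 2 * (1 - v ^ 2) ^ 3)
      (2 * v * (1 - v ^ 2) ^ 2 * (1 - 4 * v ^ 2)) v := fun v =>
    ((hasDerivAt_pow 2 v).mul (((hasDerivAt_pow 2 v).const_sub 1).fun_pow 3)).congr_deriv
      (by ring)
  exact hasDerivAt_of_hasDerivAt_off_finite (toFinite {-1, 0, 1})
    (fun v hv => hasDerivAt_signCutoff (hp v) hv)
    (continuousAt_signCutoff (by fun_prop) (by norm_num) (by norm_num) (.inr (by norm_num)))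
    continuous_psiDeriv.continuousAt

theorem hasDerivAt_psiDeriv {u : ℝ} (hu : u ≠ 0) : HasDerivAt psiDeriv (psiDeriv2 u) u := by
  have hp : ∀ v : ℝ, HasDerivAt (fun v => 2 * v * (1 - v ^ 2) ^ 2 * (1 - 4 * v ^ 2))
      (2 - 36 * v ^ 2 + 90 * v ^ 4 - 56 * v ^ 6) v := fun v =>
    ((((hasDerivAt_id v).const_mul 2).mul (((hasDerivAt_pow 2 v).const_sub 1).fun_pow 2)).mul
      (((hasDerivAt_pow 2 v).const_mul 4).const_sub 1)).congr_deriv (by simp; ring)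
  exact hasDerivAt_of_hasDerivAt_off_finite (toFinite {-1, 0, 1})
    (fun v hv => hasDerivAt_signCutoff (hp v) hv) continuous_psiDeriv.continuousAt
    (continuousAt_psiDeriv2 hu)

theorem hasDerivAt_psiDeriv2 {u : ℝ} (hu : u ∉ ({-1, 0, 1} : Set ℝ)) :
    HasDerivAt psiDeriv2 (psiDeriv3 u) u :=
  hasDerivAt_signCutoff (((((hasDerivAt_pow 2 u).const_mul 36).const_sub 2).add
    ((hasDerivAt_pow 4 u).const_mul 90) |>.sub ((hasDerivAt_pow 6 u).const_mul 56)).congr_deriv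
      (by ring)) hu

theorem abs_psiDeriv2_le (u : ℝ) : |psiDeriv2 u| ≤ 92 :=
  abs_signCutoff_le (by norm_num) fun v hv => by
    obtain ⟨h₂, h₄, h₆⟩ : 0 ≤ v ^ 2 ∧ 0 ≤ v ^ 4 ∧ 0 ≤ v ^ 6 :=
      ⟨by positivity, by positivity, by positivity⟩
    have := abs_le.1 (abs_pow_le_one hv 2)
    have := abs_le.1 (abs_pow_le_one hv 4)
    have := abs_le.1 (abs_pow_le_one hv 6)
    exact abs_le.2 ⟨by linarith, by linarith⟩

theorem abs_psiDeriv3_le (u : ℝ) : |psiDeriv3 u| ≤ 768 :=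
  abs_signCutoff_le (by norm_num) fun v hv => by
    obtain ⟨h1, h1'⟩ := abs_le.1 hv
    obtain ⟨h3, h3'⟩ := abs_le.1 (abs_pow_le_one hv 3)
    obtain ⟨h5, h5'⟩ := abs_le.1 (abs_pow_le_one hv 5)
    exact abs_le.2 ⟨by linarith, by linarith⟩

theorem hasBoundedDerivs_psi :
    HasBoundedDerivs {0} {-1, 0, 1} 768 psi psiDeriv psiDeriv2 psiDeriv3 where
  finite := toFinite _
  subset := by simp
  hasDerivAt := hasDerivAt_psi
  hasDerivAt₁ _ hu := hasDerivAt_psiDeriv hu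
  hasDerivAt₂ _ hu := hasDerivAt_psiDeriv2 hu
  continuous₁ := continuous_psiDeriv
  continuousOn₂ _ hu := (continuousAt_psiDeriv2 hu).continuousWithinAt
  abs_le₁ u := (abs_psiDeriv_le u).trans (by norm_num)
  abs_le₂ u _ := (abs_psiDeriv2_le u).trans (by norm_num)
  abs_le₃ u _ := abs_psiDeriv3_le u

section RescaledSum

variable {m : ℕ} (ξ w : Fin m → ℝ) (c : ℝ)

noncomputable def rescaledSum (f : ℝ → ℝ) (x : ℝ) : ℝ := ∑ k, w k * f ((x - ξ k) / c)

variable {ξ w c} {f f' : ℝ → ℝ} {x : ℝ}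

theorem hasDerivAt_rescaledSum (hc : c ≠ 0)
    (hf : ∀ k, HasDerivAt f (f' ((x - ξ k) / c)) ((x - ξ k) / c)) :
    HasDerivAt (rescaledSum ξ w c f) (c⁻¹ * rescaledSum ξ w c f' x) x := by
  have hk : ∀ k, HasDerivAt (fun y => w k * f ((y - ξ k) / c))
      (w k * (f' ((x - ξ k) / c) * (1 / c))) x := fun k =>
    ((hf k).comp x (((hasDerivAt_id x).sub_const (ξ k)).div_const c)).const_mul (w k)
  refine (HasDerivAt.fun_sum fun k _ => hk k).congr_deriv ?_
  simp only [rescaledSum, Finset.mul_sum]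
  exact Finset.sum_congr rfl fun k _ => by field_simp

theorem continuousAt_rescaledSum (hf : ∀ k, ContinuousAt f ((x - ξ k) / c)) :
    ContinuousAt (rescaledSum ξ w c f) x :=
  tendsto_finsetSum _ fun k _ => continuousAt_const.mul <|
    (hf k).comp (f := fun y => (y - ξ k) / c) ((continuousAt_id.sub continuousAt_const).div_const c)

theorem abs_rescaledSum_le {B : ℝ} (hf : ∀ k, |f ((x - ξ k) / c)| ≤ B) :
    |rescaledSum ξ w c f x| ≤ (∑ k, |w k|) * B := by
  rw [rescaledSum, Finset.sum_mul]
  refine (Finset.abs_sum_le_sum_abs _ _).trans (Finset.sum_le_sum fun k _ => ?_)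
  rw [abs_mul]
  exact mul_le_mul_of_nonneg_left (hf k) (abs_nonneg _)

end RescaledSum

theorem HasBoundedDerivs.id_add_rescaledSum {Z E : Set ℝ} {M : ℝ} {f f₁ f₂ f₃ : ℝ → ℝ}
    (h : HasBoundedDerivs Z E M f f₁ f₂ f₃) {m : ℕ} (ξ w : Fin m → ℝ) {c : ℝ} (hc : 0 < c) :
    ∃ M', HasBoundedDerivs (⋃ k, (fun x => (x - ξ k) / c) ⁻¹' Z)
      (⋃ k, (fun x => (x - ξ k) / c) ⁻¹' E) M' (fun x => x + c ^ 2 * rescaledSum ξ w c f x)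
      (fun x => 1 + c * rescaledSum ξ w c f₁ x) (rescaledSum ξ w c f₂)
      (fun x => c⁻¹ * rescaledSum ξ w c f₃ x) := by
  set A := ∑ k, |w k|
  have hA : 0 ≤ A := Finset.sum_nonneg fun k _ => abs_nonneg _
  have hM : 0 ≤ M := (abs_nonneg _).trans (h.abs_le₁ 0)
  have hZ : ∀ x ∉ ⋃ k, (fun x => (x - ξ k) / c) ⁻¹' Z, ∀ k, (x - ξ k) / c ∉ Z := by
    simp
  have hE : ∀ x ∉ ⋃ k, (fun x => (x - ξ k) / c) ⁻¹' E, ∀ k, (x - ξ k) / c ∉ E := by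
    simp
  have hZopen : IsOpen Zᶜ := (h.finite.subset h.subset).isClosed.isOpen_compl
  refine ⟨1 + c * (A * M) + A * M + c⁻¹ * (A * M),
    { finite := finite_iUnion fun k => h.finite.preimage fun x _ y _ hxy => by
        field_simp at hxy
        linarith
      subset := iUnion_mono fun k => preimage_mono h.subset
      hasDerivAt := fun x => ((hasDerivAt_id x).add ((hasDerivAt_rescaledSum hc.ne'
        fun k => h.hasDerivAt _).const_mul (c ^ 2))).congr_deriv (by field_simp)
      hasDerivAt₁ := fun x hx => ((hasDerivAt_rescaledSum hc.ne'
        fun k => h.hasDerivAt₁ _ (hZ x hx k)).const_mul c).const_add 1 |>.congr_deriv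
          (by field_simp)
      hasDerivAt₂ := fun x hx => hasDerivAt_rescaledSum hc.ne' fun k => h.hasDerivAt₂ _ (hE x hx k)
      continuous₁ := continuous_const.add (continuous_const.mul
        (continuous_iff_continuousAt.2 fun x =>
          continuousAt_rescaledSum fun k => h.continuous₁.continuousAt))
      continuousOn₂ := fun x hx => (continuousAt_rescaledSum fun k =>
        h.continuousOn₂.continuousAt (hZopen.mem_nhds (hZ x hx k))).continuousWithinAt
      abs_le₁ := fun x => ?_
      abs_le₂ := fun x hx => ?_
      abs_le₃ := fun x hx => ?_ }⟩
  · have := abs_rescaledSum_le (w := w) fun k => h.abs_le₁ ((x - ξ k) / c)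
    calc |1 + c * rescaledSum ξ w c f₁ x| ≤ 1 + c * (A * M) := by
          refine (abs_add_le _ _).trans ?_
          rw [abs_one, abs_mul, abs_of_pos hc]
          gcongr
      _ ≤ _ := by nlinarith [mul_nonneg hA hM, inv_nonneg.2 hc.le]
  · have := abs_rescaledSum_le (w := w) fun k => h.abs_le₂ _ (hZ x hx k)
    nlinarith [mul_nonneg hA hM, inv_nonneg.2 hc.le]
  · have := abs_rescaledSum_le (w := w) fun k => h.abs_le₃ _ (hE x hx k)
    rw [abs_mul, abs_of_pos (inv_pos.2 hc)]
    nlinarith [mul_nonneg hA hM, inv_nonneg.2 hc.le]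

section Transform

variable {m : ℕ} {ξ α : Fin m → ℝ} {c : ℝ}

theorem two_mul_lt_sub_of_lt (hξ : StrictMono ξ)
    (hc₂ : ∀ (k : ℕ) (hk : k + 1 < m), 2 * c < ξ ⟨k + 1, hk⟩ - ξ ⟨k, Nat.lt_of_succ_lt hk⟩)
    {j k : Fin m} (hjk : j < k) : 2 * c < ξ k - ξ j := by
  have hj : (j : ℕ) + 1 < m := by omega
  have hgap := hc₂ j hj
  rw [Fin.eta] at hgap
  linarith [hξ.monotone (show (⟨j + 1, hj⟩ : Fin m) ≤ k from Fin.le_def.2 hjk)]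

theorem rescaledSum_psi_eq_zero (hc : 0 < c) {x : ℝ} (hx : ∀ k, x = ξ k ∨ c ≤ |x - ξ k|) :
    rescaledSum ξ α c psi x = 0 :=
  Finset.sum_eq_zero fun k _ => by
    rcases hx k with rfl | hk
    · simp [psi_zero]
    · rw [psi_eq_zero_of_one_le_abs (by rwa [abs_div, abs_of_pos hc, one_le_div hc]), mul_zero]

theorem rescaledSum_psi_eq_zero_of_notMem (hc : 0 < c) {x : ℝ}
    (hx : x ∉ ⋃ k, Ioo (ξ k - c) (ξ k + c)) : rescaledSum ξ α c psi x = 0 :=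
  rescaledSum_psi_eq_zero hc fun k => .inr <| not_lt.1 fun h =>
    hx (mem_iUnion.2 ⟨k, by rw [abs_sub_lt_iff] at h; constructor <;> linarith⟩)

theorem abs_sq_mul_rescaledSum_psi_le (x : ℝ) :
    |c ^ 2 * rescaledSum ξ α c psi x| ≤ c ^ 2 * ∑ k, |α k| := by
  rw [abs_mul, abs_of_nonneg (sq_nonneg _)]
  simpa using mul_le_mul_of_nonneg_left
    (abs_rescaledSum_le (w := α) fun k => abs_psi_le_one _) (sq_nonneg c)

theorem iUnion_preimage_sub_div_zero (hc : c ≠ 0) :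
    ⋃ k, (fun x => (x - ξ k) / c) ⁻¹' {0} = range ξ := by
  ext x
  simp [sub_eq_zero, hc, eq_comm]

variable (hsep : ∀ j k : Fin m, j < k → 2 * c < ξ k - ξ j)
include hsep

theorem eq_of_abs_sub_le {x : ℝ} {j k : Fin m} (hj : |x - ξ j| ≤ c) (hk : |x - ξ k| ≤ c) :
    j = k := by
  obtain ⟨hj₁, hj₂⟩ := abs_le.1 hj
  obtain ⟨hk₁, hk₂⟩ := abs_le.1 hk
  by_contra hne
  rcases lt_or_gt_of_ne hne with h | h
  · linarith [hsep j k h]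
  · linarith [hsep k j h]

theorem le_abs_sub_of_ne (hc : 0 ≤ c) {j k : Fin m} (hjk : j ≠ k) : c ≤ |ξ k - ξ j| := by
  rcases lt_or_gt_of_ne hjk with h | h
  · rw [abs_of_pos (by linarith [hsep j k h])]
    linarith [hsep j k h]
  · rw [abs_of_neg (by linarith [hsep k j h])]
    linarith [hsep k j h]

theorem rescaledSum_psi_self_eq_zero (hc : 0 < c) (k : Fin m) :
    rescaledSum ξ α c psi (ξ k) = 0 :=
  rescaledSum_psi_eq_zero hc fun j =>
    (eq_or_ne j k).imp (fun h => by rw [h]) (le_abs_sub_of_ne hsep hc.le)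

theorem exists_pos_le_one_add_mul_rescaledSum_psiDeriv (hc : 0 < c)
    (hc₁ : ∀ k, 6 * c * |α k| < 1) :
    ∃ δ > 0, ∀ x, δ ≤ 1 + c * rescaledSum ξ α c psiDeriv x := by
  obtain ⟨δ, hδ, hδ₁, hδk⟩ : ∃ δ > 0, δ ≤ 1 ∧ ∀ k, 6 * c * |α k| ≤ 1 - δ := by
    rcases isEmpty_or_nonempty (Fin m) with _ | _
    · exact ⟨1, one_pos, le_rfl, fun k => isEmptyElim k⟩
    · obtain ⟨k₀, hk₀⟩ := Finite.exists_max fun k => 6 * c * |α k|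
      exact ⟨1 - 6 * c * |α k₀|, by linarith [hc₁ k₀], by nlinarith [abs_nonneg (α k₀)],
        fun k => by linarith [hk₀ k]⟩
  refine ⟨δ, hδ, fun x => ?_⟩
  by_cases hx : ∃ k, |x - ξ k| ≤ c
  · obtain ⟨k, hk⟩ := hx
    have hsum : rescaledSum ξ α c psiDeriv x = α k * psiDeriv ((x - ξ k) / c) := by
      refine Finset.sum_eq_single k (fun j _ hjk => ?_) (by simp)
      have hj : c < |x - ξ j| := lt_of_not_ge fun hj => hjk (eq_of_abs_sub_le hsep hj hk)
      rw [psiDeriv_eq_zero_of_one_lt_abs (by rwa [abs_div, abs_of_pos hc, one_lt_div hc]),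
        mul_zero]
    have hbound : |c * (α k * psiDeriv ((x - ξ k) / c))| ≤ 6 * c * |α k| := by
      rw [abs_mul, abs_mul, abs_of_pos hc, ← mul_assoc]
      linarith [mul_le_mul_of_nonneg_left (abs_psiDeriv_le ((x - ξ k) / c))
        (mul_nonneg hc.le (abs_nonneg (α k)))]
    rw [hsum]
    linarith [(abs_le.1 hbound).1, hδk k]
  · simp only [not_exists, not_le] at hx
    have hsum : rescaledSum ξ α c psiDeriv x = 0 := Finset.sum_eq_zero fun k _ => by
      have hk : 1 < |(x - ξ k) / c| := by rw [abs_div, abs_of_pos hc, one_lt_div hc]; exact hx k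
      rw [psiDeriv_eq_zero_of_one_lt_abs hk, mul_zero]
    rw [hsum]
    linarith

end Transform

theorem stmt_7 (m : ℕ) (ξ : Fin m → ℝ) (hξ : StrictMono ξ) (α : Fin m → ℝ)
    (c₀ : ℝ) (hc₀ : 0 < c₀) (hc₁ : ∀ k : Fin m, 6 * c₀ * |α k| < 1)
    (hc₂ : ∀ (k : ℕ) (hk : k + 1 < m), 2 * c₀ < ξ ⟨k + 1, hk⟩ - ξ ⟨k, by omega⟩)
    (G : ℝ → ℝ) (hG : ∀ x : ℝ, G x = x + ∑ k : Fin m, α k * phibar (ξ k) c₀ x) :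
    (∀ x : ℝ, x ∉ ⋃ k : Fin m, Set.Ioo (ξ k - c₀) (ξ k + c₀) → G x = x) ∧
    (StrictMono G ∧ Function.Bijective G ∧ StrictMono (Function.invFun G)) ∧
    ((∃ M : ℝ, ∀ x : ℝ, |G x - x| ≤ M ∧ |Function.invFun G x - x| ≤ M) ∧
      (∃ K : NNReal, LipschitzWith K G ∧ LipschitzWith K (Function.invFun G))) ∧
    (Differentiable ℝ G ∧ Differentiable ℝ (Function.invFun G) ∧
      (∃ M : ℝ, ∀ x : ℝ, |deriv G x| ≤ M ∧ |deriv (Function.invFun G) x| ≤ M) ∧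
      (∃ K : NNReal, LipschitzWith K (deriv G) ∧
        LipschitzWith K (deriv (Function.invFun G))) ∧
      (∀ x : ℝ, (∀ k : Fin m, x ≠ ξ k) →
        DifferentiableAt ℝ (deriv G) x ∧ DifferentiableAt ℝ (deriv (Function.invFun G)) x) ∧
      (∃ M : ℝ, ∀ x : ℝ, (∀ k : Fin m, x ≠ ξ k) →
        |deriv (deriv G) x| ≤ M ∧ |deriv (deriv (Function.invFun G)) x| ≤ M) ∧
      (∃ K : NNReal, ∀ s : Set ℝ, IsPreconnected s → (∀ x ∈ s, ∀ k : Fin m, x ≠ ξ k) →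
        LipschitzOnWith K (deriv (deriv G)) s ∧
        LipschitzOnWith K (deriv (deriv (Function.invFun G))) s)) := by
  have hsep : ∀ j k : Fin m, j < k → 2 * c₀ < ξ k - ξ j := fun _ _ => two_mul_lt_sub_of_lt hξ hc₂
  obtain rfl : G = fun x => x + c₀ ^ 2 * rescaledSum ξ α c₀ psi x := funext fun x => by
    rw [hG, rescaledSum, Finset.mul_sum]
    exact congrArg _ (Finset.sum_congr rfl fun k _ => by rw [phibar_eq_psi hc₀]; ring)
  obtain ⟨M, hGd⟩ := hasBoundedDerivs_psi.id_add_rescaledSum ξ α hc₀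
  rw [iUnion_preimage_sub_div_zero hc₀.ne'] at hGd
  obtain ⟨δ, hδ, hδle⟩ := exists_pos_le_one_add_mul_rescaledSum_psiDeriv hsep hc₀ hc₁
  obtain ⟨M', _, _, _, hΦd⟩ := hGd.invFun hδ hδle <| by
    rintro _ ⟨k, rfl⟩
    simp [rescaledSum_psi_self_eq_zero hsep hc₀ k]
  have hsurj := surjective_of_le_hasDerivAt hGd.hasDerivAt hδ hδle
  have hmono := strictMono_of_hasDerivAt_pos hGd.hasDerivAt fun x => hδ.trans_le (hδle x)
  have hB : ∀ x, |x + c₀ ^ 2 * rescaledSum ξ α c₀ psi x - x| ≤ c₀ ^ 2 * ∑ k, |α k| :=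
    fun x => by simpa using abs_sq_mul_rescaledSum_psi_le x
  replace hGd := hGd.mono (le_max_left M M')
  replace hΦd := hΦd.mono (le_max_right M M')
  have hZ : ∀ x, (∀ k, x ≠ ξ k) → x ∉ range ξ := fun x hx ⟨k, hk⟩ => hx k hk.symm
  exact ⟨fun x hx => by simp [rescaledSum_psi_eq_zero_of_notMem hc₀ hx],
    ⟨hmono, ⟨hmono.injective, hsurj⟩, hmono.strictMono_invFun hsurj⟩,
    ⟨⟨_, fun x => ⟨hB x, abs_invFun_sub_le hsurj hB x⟩⟩,
      ⟨_, hGd.lipschitzWith, hΦd.lipschitzWith⟩⟩,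
    hGd.differentiable, hΦd.differentiable,
    ⟨_, fun x => ⟨hGd.abs_deriv_le x, hΦd.abs_deriv_le x⟩⟩,
    ⟨_, hGd.lipschitzWith_deriv, hΦd.lipschitzWith_deriv⟩,
    fun x hx => ⟨(hGd.hasDerivAt_deriv (hZ x hx)).differentiableAt,
      (hΦd.hasDerivAt_deriv (hZ x hx)).differentiableAt⟩,
    ⟨_, fun x hx => ⟨hGd.abs_deriv_deriv_le (hZ x hx), hΦd.abs_deriv_deriv_le (hZ x hx)⟩⟩,
    ⟨_, fun s hs hsξ => ⟨hGd.lipschitzOnWith_deriv_deriv hs fun x hx => hZ x (hsξ x hx),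
      hΦd.lipschitzOnWith_deriv_deriv hs fun x hx => hZ x (hsξ x hx)⟩⟩⟩
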